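/- arXiv:2009.13995 — 4 statements merged into one kernel-verified Lean document; each statement's English description precedes it below -/
import Mathlib

section
/- Let X_1,...,X_n be real numbers in [0,1] and a,b>0. Then n·∫_0^1 |(1/n)·Σ_{j=1}^n ((a+b)X_j − a)·1{X_j≥t} − t^a(1−t)^b/B(a,b)|² dt = (1/n)·Σ_{j,k=1}^n ((a+b)²X_jX_k − a(a+b)(X_j+X_k) + a²)·min(X_j,X_k) − (2B(a+1,b+1)/B(a,b))·Σ_{j=1}^n ((a+b)X_j − a)·F_{(a+1,b+1)}(X_j) + n·B(2a+1,2b+1)/B(a,b)². -/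
/-!
Expanding the square reduces the integral to three elementary ones:
`∫₀¹ 1{t ≤ x} 1{t ≤ y} dt = min x y`,
`∫₀¹ 1{t ≤ x} t^a (1-t)^b dt = B(a+1, b+1) F_{(a+1,b+1)}(x)` and
`∫₀¹ t^(2a) (1-t)^(2b) dt = B(2a+1, 2b+1)`, the last being the real Beta integral.
-/

open Finset

noncomputable def betaFun (a b : ℝ) : ℝ := Real.Gamma a * Real.Gamma b / Real.Gamma (a + b)

/-- The Beta(a,b) cumulative distribution function. -/
noncomputable def betaCDF (a b x : ℝ) : ℝ :=
  (∫ s in (0:ℝ)..x, s ^ (a - 1) * (1 - s) ^ (b - 1)) / betaFun a b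

open MeasureTheory

theorem IntervalIntegrable.fun_sum {ι : Type*} {μ : Measure ℝ} {a b : ℝ} (s : Finset ι)
    {f : ι → ℝ → ℝ} (h : ∀ i ∈ s, IntervalIntegrable (f i) μ a b) :
    IntervalIntegrable (fun t => ∑ i ∈ s, f i t) μ a b := by
  simpa only [Finset.sum_fn] using IntervalIntegrable.sum s h

theorem mul_sum_mul_sub_sq {ι : Type*} (s : Finset ι) (r : ℝ) (c f : ι → ℝ) (g : ℝ) :
    (r * ∑ j ∈ s, c j * f j - g) ^ 2 =
      r ^ 2 * ∑ j ∈ s, ∑ k ∈ s, c j * c k * (f j * f k)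
        - 2 * r * ∑ j ∈ s, c j * (f j * g) + g ^ 2 := by
  rw [sub_sq, mul_pow, sq (∑ j ∈ s, _), Finset.sum_mul_sum, mul_assoc 2, mul_assoc r,
    Finset.sum_mul]
  simp only [mul_mul_mul_comm (c _) (f _), mul_assoc (c _) (f _) g]
  ring

theorem intervalIntegral_mul_sum_mul_sub_sq {ι : Type*} {μ : Measure ℝ} {a b : ℝ}
    (s : Finset ι) (r : ℝ) (c : ι → ℝ) {f : ι → ℝ → ℝ} {g : ℝ → ℝ}
    (hff : ∀ j ∈ s, ∀ k ∈ s, IntervalIntegrable (fun t => f j t * f k t) μ a b)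
    (hfg : ∀ j ∈ s, IntervalIntegrable (fun t => f j t * g t) μ a b)
    (hg : IntervalIntegrable (fun t => g t ^ 2) μ a b) :
    ∫ t in a..b, (r * ∑ j ∈ s, c j * f j t - g t) ^ 2 ∂μ =
      r ^ 2 * ∑ j ∈ s, ∑ k ∈ s, c j * c k * ∫ t in a..b, f j t * f k t ∂μ
        - 2 * r * ∑ j ∈ s, c j * ∫ t in a..b, f j t * g t ∂μ + ∫ t in a..b, g t ^ 2 ∂μ := by
  have hff' : ∀ j ∈ s,
      IntervalIntegrable (fun t => ∑ k ∈ s, c j * c k * (f j t * f k t)) μ a b :=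
    fun j hj => .fun_sum s fun k hk => (hff j hj k hk).const_mul _
  have hfg' : ∀ j ∈ s, IntervalIntegrable (fun t => c j * (f j t * g t)) μ a b :=
    fun j hj => (hfg j hj).const_mul _
  have hquad := (IntervalIntegrable.fun_sum s hff').const_mul (r ^ 2)
  have hcross := (IntervalIntegrable.fun_sum s hfg').const_mul (2 * r)
  simp only [mul_sum_mul_sub_sq]
  rw [intervalIntegral.integral_add (hquad.sub hcross) hg,
    intervalIntegral.integral_sub hquad hcross,
    intervalIntegral.integral_const_mul, intervalIntegral.integral_const_mul,
    intervalIntegral.integral_finsetSum hff', intervalIntegral.integral_finsetSum hfg']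
  simp only [intervalIntegral.integral_const_mul]
  congr 3
  refine Finset.sum_congr rfl fun j hj => ?_
  rw [intervalIntegral.integral_finsetSum fun k hk => (hff j hj k hk).const_mul _]
  simp only [intervalIntegral.integral_const_mul]

theorem ite_le_mul_ite_le (t x y : ℝ) :
    ((if t ≤ x then 1 else 0) * if t ≤ y then 1 else 0 : ℝ) = if t ≤ min x y then 1 else 0 := by
  simp only [le_min_iff, ite_zero_mul_ite_zero, mul_one]

theorem intervalIntegrable_ite_le {μ : Measure ℝ} [IsLocallyFiniteMeasure μ] (x a b : ℝ) :
    IntervalIntegrable (fun t : ℝ => if t ≤ x then (1 : ℝ) else 0) μ a b :=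
  Antitone.intervalIntegrable fun s t hst => by
    split_ifs with ht hs <;> first | exact absurd (hst.trans ht) hs | norm_num

theorem integral_ite_le_mul {μ : Measure ℝ} {a x b : ℝ} (hx : x ∈ Set.Icc a b) (f : ℝ → ℝ) :
    ∫ t in a..b, (if t ≤ x then 1 else 0) * f t ∂μ = ∫ t in a..x, f t ∂μ := by
  rw [← intervalIntegral.integral_indicator hx]
  congr 1 with t
  by_cases h : t ≤ x <;> simp [h]

theorem integral_ite_le_mul_ite_le {a b x y : ℝ} (hx : x ∈ Set.Icc a b) (hy : y ∈ Set.Icc a b) :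
    ∫ t in a..b, (if t ≤ x then 1 else 0) * (if t ≤ y then 1 else 0) = min x y - a := by
  have hmin : min x y ∈ Set.Icc a b := ⟨le_min hx.1 hy.1, min_le_of_left_le hx.2⟩
  simpa only [ite_le_mul_ite_le, mul_one, intervalIntegral.integral_const, smul_eq_mul]
    using integral_ite_le_mul (μ := volume) hmin fun _ => 1

theorem betaFun_pos {a b : ℝ} (ha : 0 < a) (hb : 0 < b) : 0 < betaFun a b :=
  ProbabilityTheory.beta_pos ha hb

theorem integral_rpow_mul_one_sub_rpow_eq_betaFun {a b : ℝ} (ha : 0 < a) (hb : 0 < b) :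
    ∫ x in (0:ℝ)..1, x ^ (a - 1) * (1 - x) ^ (b - 1) = betaFun a b := by
  have hcast : ((∫ x in (0:ℝ)..1, x ^ (a - 1) * (1 - x) ^ (b - 1) : ℝ) : ℂ) =
      Complex.betaIntegral a b := by
    rw [← intervalIntegral.integral_ofReal]
    refine intervalIntegral.integral_congr fun x hx => ?_
    rw [Set.uIcc_of_le zero_le_one] at hx
    push_cast
    rw [Complex.ofReal_cpow hx.1, Complex.ofReal_cpow (sub_nonneg.2 hx.2)]
    push_cast
    rfl
  rw [betaFun, ← ProbabilityTheory.beta, ProbabilityTheory.beta_eq_betaIntegralReal a b ha hb,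
    ← hcast, Complex.ofReal_re]

theorem integral_ite_le_mul_rpow_mul_one_sub_rpow_div {a b x : ℝ} (ha : 0 < a + 1) (hb : 0 < b + 1)
    (hx : x ∈ Set.Icc 0 1) :
    ∫ t in (0:ℝ)..1, (if t ≤ x then 1 else 0) * (t ^ a * (1 - t) ^ b / betaFun a b) =
      betaFun (a + 1) (b + 1) / betaFun a b * betaCDF (a + 1) (b + 1) x := by
  rw [integral_ite_le_mul hx, intervalIntegral.integral_div, betaCDF, add_sub_cancel_right,
    add_sub_cancel_right]
  field_simp [(betaFun_pos ha hb).ne']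

theorem integral_rpow_mul_one_sub_rpow_div_sq {a b : ℝ} (ha : 0 < 2 * a + 1) (hb : 0 < 2 * b + 1) :
    ∫ t in (0:ℝ)..1, (t ^ a * (1 - t) ^ b / betaFun a b) ^ 2 =
      betaFun (2 * a + 1) (2 * b + 1) / betaFun a b ^ 2 := by
  rw [← integral_rpow_mul_one_sub_rpow_eq_betaFun ha hb, ← intervalIntegral.integral_div]
  refine intervalIntegral.integral_congr fun t ht => ?_
  rw [Set.uIcc_of_le zero_le_one] at ht
  rw [div_pow, mul_pow, ← Real.rpow_mul_natCast ht.1, ← Real.rpow_mul_natCast (sub_nonneg.2 ht.2)]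
  ring_nf

theorem test_statistic_representation (n : ℕ) (hn : 0 < n) (X : Fin n → ℝ)
    (hX : ∀ j, X j ∈ Set.Icc (0:ℝ) 1) (a b : ℝ) (ha : 0 < a) (hb : 0 < b) :
    (n : ℝ) * ∫ t in (0:ℝ)..1,
        |(1 / (n : ℝ)) * ∑ j : Fin n, ((a + b) * X j - a) * (if t ≤ X j then (1:ℝ) else 0)
          - t ^ a * (1 - t) ^ b / betaFun a b| ^ 2 =
      (1 / (n : ℝ)) * ∑ j : Fin n, ∑ k : Fin n,
          ((a + b) ^ 2 * X j * X k - a * (a + b) * (X j + X k) + a ^ 2) * min (X j) (X k)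
        - (2 * betaFun (a + 1) (b + 1) / betaFun a b) *
            ∑ j : Fin n, ((a + b) * X j - a) * betaCDF (a + 1) (b + 1) (X j)
        + (n : ℝ) * betaFun (2 * a + 1) (2 * b + 1) / (betaFun a b) ^ 2 := by
  have hdensity : Continuous fun t : ℝ => t ^ a * (1 - t) ^ b / betaFun a b :=
    ((Real.continuous_rpow_const ha.le).mul
      ((Real.continuous_rpow_const hb.le).comp (continuous_const.sub continuous_id))).div_const _
  simp only [sq_abs]
  rw [intervalIntegral_mul_sum_mul_sub_sq _ _ _
      (fun j _ k _ => by simpa only [ite_le_mul_ite_le] using intervalIntegrable_ite_le _ _ _)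
      (fun j _ => (intervalIntegrable_ite_le _ _ _).mul_continuousOn hdensity.continuousOn)
      ((hdensity.pow 2).intervalIntegrable _ _)]
  simp only [integral_ite_le_mul_ite_le (hX _) (hX _), sub_zero,
    integral_ite_le_mul_rpow_mul_one_sub_rpow_div (a := a) (b := b) (by linarith) (by linarith)
      (hX _),
    integral_rpow_mul_one_sub_rpow_div_sq (a := a) (b := b) (by linarith) (by linarith),
    mul_left_comm _ (betaFun (a + 1) (b + 1) / betaFun a b), ← Finset.mul_sum]
  have hpoly : ∀ x y : ℝ, ((a + b) * x - a) * ((a + b) * y - a) =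
      (a + b) ^ 2 * x * y - a * (a + b) * (x + y) + a ^ 2 := fun x y => by ring
  simp only [hpoly]
  field_simp
end

section
/- For α,β>0, the 2×2 Fisher information matrix of the Beta(α,β) family, I(α,β) = [[Ψ₁(α)−Ψ₁(α+β), −Ψ₁(α+β)],[−Ψ₁(α+β), Ψ₁(β)−Ψ₁(α+β)]], has determinant det I(α,β) = Ψ₁(α)Ψ₁(β) − (Ψ₁(α)+Ψ₁(β))Ψ₁(α+β), and this determinant is strictly positive, i.e. (Ψ₁(α)+Ψ₁(β))Ψ₁(α+β) < Ψ₁(α)Ψ₁(β), so the matrix is invertible with inverse ((Ψ₁(α)+Ψ₁(β))Ψ₁(α+β)−Ψ₁(α)Ψ₁(β))^{-1}·[[Ψ₁(α+β)−Ψ₁(β), −Ψ₁(α+β)],[−Ψ₁(α+β), Ψ₁(α+β)−Ψ₁(α)]]. -/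
open Matrix Filter Topology

/-- The trigamma function Ψ₁(x) = ∑_{k≥0} 1/(x+k)². -/
noncomputable def trigamma (x : ℝ) : ℝ := ∑' k : ℕ, 1 / (x + k) ^ 2

private lemma tele_sum {F : ℕ → ℝ} (hmono : ∀ n, F (n + 1) ≤ F n)
    (h0 : Tendsto F atTop (nhds 0)) :
    Summable (fun n => F n - F (n + 1)) ∧ ∑' n, (F n - F (n + 1)) = F 0 := by
  have hanti : Antitone F := antitone_nat_of_succ_le hmono
  have hFnn : ∀ n, 0 ≤ F n := fun n =>
    le_of_tendsto h0 (Filter.eventually_atTop.2 ⟨n, fun m hm => hanti hm⟩)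
  have hsum : Summable fun n => F n - F (n + 1) :=
    summable_of_sum_range_le (fun n => sub_nonneg.2 (hmono n))
      (fun n => by rw [Finset.sum_range_sub' F n]; linarith [hFnn n])
  refine ⟨hsum, ?_⟩
  have h1 := hsum.hasSum.tendsto_sum_nat
  have h2 : Tendsto (fun n => ∑ i ∈ Finset.range n, (F i - F (i + 1))) atTop (nhds (F 0)) := by
    simp only [Finset.sum_range_sub' F]
    simpa using tendsto_const_nhds.sub h0
  exact tendsto_nhds_unique h1 h2

private lemma tendsto_aux (x : ℝ) (hx : 0 < x) :
    Tendsto (fun n : ℕ => x + (n : ℝ)) atTop atTop :=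
  tendsto_atTop_add_const_left _ x tendsto_natCast_atTop_atTop

private lemma F_tendsto (x : ℝ) (hx : 0 < x) :
    Tendsto (fun n : ℕ => 1 / (x + (n : ℝ)) + 1 / (2 * (x + (n : ℝ)) ^ 2)) atTop (nhds 0) := by
  have hat := tendsto_aux x hx
  have h1 : Tendsto (fun n : ℕ => 1 / (x + (n : ℝ))) atTop (nhds 0) := by
    exact hat.inv_tendsto_atTop.congr (fun n => (one_div _).symm)
  have h2 : Tendsto (fun n : ℕ => 1 / (2 * (x + (n : ℝ)) ^ 2)) atTop (nhds 0) := by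
    have := (h1.pow 2).const_mul (1 / 2 : ℝ)
    simp only [ne_eq, OfNat.ofNat_ne_zero, not_false_eq_true, zero_pow, mul_zero] at this
    convert this using 2 with n
    field_simp
  simpa using h1.add h2

/-- The key exact decomposition: Ψ₁(x) = 1/x + 1/(2x²) + ∑ 1/(2(x+k)²(x+k+1)²). -/
private lemma trigamma_eq (x : ℝ) (hx : 0 < x) :
    Summable (fun n : ℕ => 1 / (2 * (x + n) ^ 2 * (x + n + 1) ^ 2)) ∧
    trigamma x = 1 / x + 1 / (2 * x ^ 2) +
      ∑' n : ℕ, 1 / (2 * (x + n) ^ 2 * (x + n + 1) ^ 2) ∧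
    ∑' n : ℕ, 1 / (2 * (x + n) ^ 2 * (x + n + 1) ^ 2) ≤ 1 / (2 * x ^ 2) := by
  have hpos : ∀ n : ℕ, (0:ℝ) < x + n := fun n => by positivity
  -- telescoping F
  set F : ℕ → ℝ := fun n => 1 / (x + (n : ℝ)) + 1 / (2 * (x + (n : ℝ)) ^ 2) with hF
  have hFmono : ∀ n, F (n + 1) ≤ F n := by
    intro n
    have h1 : (0:ℝ) < x + n := hpos n
    simp only [hF]
    push_cast
    gcongr <;> linarith
  have hFt : Tendsto F atTop (nhds 0) := F_tendsto x hx
  obtain ⟨hFs, hFsum⟩ := tele_sum hFmono hFt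
  -- telescoping G for domination of the g-series
  set G : ℕ → ℝ := fun n => 1 / (2 * (x + (n : ℝ)) ^ 2) with hG
  have hGmono : ∀ n, G (n + 1) ≤ G n := by
    intro n
    have h1 : (0:ℝ) < x + n := hpos n
    simp only [hG]
    push_cast
    gcongr <;> linarith
  have hGt : Tendsto G atTop (nhds 0) := by
    have hat := tendsto_aux x hx
    have h1 : Tendsto (fun n : ℕ => 1 / (x + (n : ℝ))) atTop (nhds 0) := by
      exact hat.inv_tendsto_atTop.congr (fun n => (one_div _).symm)
    have := (h1.pow 2).const_mul (1 / 2 : ℝ)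
    simp only [ne_eq, OfNat.ofNat_ne_zero, not_false_eq_true, zero_pow, mul_zero] at this
    convert this using 2 with n
    simp only [hG]; field_simp
  obtain ⟨hGs, hGsum⟩ := tele_sum hGmono hGt
  set g : ℕ → ℝ := fun n => 1 / (2 * (x + (n : ℝ)) ^ 2 * (x + (n : ℝ) + 1) ^ 2) with hg
  have hg_nonneg : ∀ n, 0 ≤ g n := fun n => by
    have := hpos n; positivity
  have hg_le : ∀ n, g n ≤ G n - G (n + 1) := by
    intro n
    have h1 : (0:ℝ) < x + n := hpos n
    have key : G n - G (n + 1) - g n = (x + (n:ℝ)) / ((x + n) ^ 2 * (x + n + 1) ^ 2) := by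
      simp only [hg, hG]
      push_cast
      field_simp
      ring
    have h2 : (0:ℝ) ≤ (x + (n:ℝ)) / ((x + n) ^ 2 * (x + n + 1) ^ 2) := by positivity
    linarith
  have hgs : Summable g := Summable.of_nonneg_of_le hg_nonneg hg_le hGs
  -- pointwise identity
  have hpt : ∀ n : ℕ, 1 / (x + (n : ℝ)) ^ 2 = (F n - F (n + 1)) + g n := by
    intro n
    have h1 : (0:ℝ) < x + n := hpos n
    simp only [hF, hg]
    push_cast
    field_simp
    ring
  have hsum2 : Summable (fun n : ℕ => 1 / (x + (n : ℝ)) ^ 2) := by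
    simpa only [← hpt] using hFs.add hgs
  have htri : trigamma x = ∑' n, ((F n - F (n + 1)) + g n) := by
    unfold trigamma
    exact tsum_congr hpt
  have hgbound : ∑' n, g n ≤ 1 / (2 * x ^ 2) := by
    have := Summable.tsum_le_tsum hg_le hgs hGs
    rw [hGsum] at this
    simpa [hG] using this
  refine ⟨hgs, ?_, hgbound⟩
  rw [htri, Summable.tsum_add hFs hgs, hFsum]
  simp only [hF]
  norm_num

private lemma trigamma_lower (x : ℝ) (hx : 0 < x) :
    1 / x + 1 / (2 * x ^ 2) ≤ trigamma x := by
  obtain ⟨hgs, heq, hgb⟩ := trigamma_eq x hx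
  have : 0 ≤ ∑' n : ℕ, 1 / (2 * (x + (n:ℝ)) ^ 2 * (x + (n:ℝ) + 1) ^ 2) :=
    tsum_nonneg fun n => by positivity
  linarith [heq]

private lemma trigamma_upper (x : ℝ) (hx : 0 < x) :
    trigamma x ≤ 1 / x + 1 / x ^ 2 := by
  obtain ⟨hgs, heq, hgb⟩ := trigamma_eq x hx
  have h2 : (0:ℝ) < x ^ 2 := by positivity
  rw [heq]
  have : 1 / (2 * x ^ 2) + 1 / (2 * x ^ 2) = 1 / x ^ 2 := by field_simp; ring
  linarith

private lemma trigamma_diff (x y : ℝ) (hx : 0 < x) (hxy : x ≤ y) (hy : 0 < y) :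
    (1 / x + 1 / (2 * x ^ 2)) - (1 / y + 1 / (2 * y ^ 2)) ≤ trigamma x - trigamma y := by
  obtain ⟨hgsx, heqx, -⟩ := trigamma_eq x hx
  obtain ⟨hgsy, heqy, -⟩ := trigamma_eq y hy
  have hle : ∑' n : ℕ, 1 / (2 * (y + (n:ℝ)) ^ 2 * (y + (n:ℝ) + 1) ^ 2) ≤
      ∑' n : ℕ, 1 / (2 * (x + (n:ℝ)) ^ 2 * (x + (n:ℝ) + 1) ^ 2) := by
    refine Summable.tsum_le_tsum (fun n => ?_) hgsy hgsx
    have h1 : (0:ℝ) < x + n := by positivity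
    gcongr <;> linarith
  linarith [heqx, heqy, hle]

private lemma trigamma_pos (x : ℝ) (hx : 0 < x) : 0 < trigamma x :=
  lt_of_lt_of_le (by positivity) (trigamma_lower x hx)

theorem beta_fisher_information_inverse (α β : ℝ) (hα : 0 < α) (hβ : 0 < β) :
    let I : Matrix (Fin 2) (Fin 2) ℝ :=
      !![trigamma α - trigamma (α + β), - trigamma (α + β);
         - trigamma (α + β), trigamma β - trigamma (α + β)]
    I.det = trigamma α * trigamma β - (trigamma α + trigamma β) * trigamma (α + β) ∧
    0 < I.det ∧
    IsUnit I.det ∧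
    I⁻¹ = ((trigamma α + trigamma β) * trigamma (α + β) -
            trigamma α * trigamma β)⁻¹ •
      !![trigamma (α + β) - trigamma β, - trigamma (α + β);
         - trigamma (α + β), trigamma (α + β) - trigamma α] := by
  intro I
  have hs : (0:ℝ) < α + β := by positivity
  set A := trigamma α with hA
  set B := trigamma β with hB
  set T := trigamma (α + β) with hT
  have hT0 : 0 < T := trigamma_pos _ hs
  have hTU : T ≤ (α + β + 1) / (α + β) ^ 2 := by
    refine (trigamma_upper _ hs).trans_eq ?_
    field_simp
  have hAT : β * (2 * α * (α + β) + (α + β) + α) / (2 * α ^ 2 * (α + β) ^ 2) ≤ A - T := by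
    refine le_trans (le_of_eq ?_) (trigamma_diff α (α + β) hα (by linarith) hs)
    field_simp
    ring
  have hBT : α * (2 * β * (α + β) + (α + β) + β) / (2 * β ^ 2 * (α + β) ^ 2) ≤ B - T := by
    refine le_trans (le_of_eq ?_) (trigamma_diff β (α + β) hβ (by linarith) hs)
    rw [add_comm α β]
    field_simp
    ring
  have hDApos : 0 < β * (2 * α * (α + β) + (α + β) + α) / (2 * α ^ 2 * (α + β) ^ 2) := by
    positivity
  have hDBpos : 0 < α * (2 * β * (α + β) + (α + β) + β) / (2 * β ^ 2 * (α + β) ^ 2) := by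
    positivity
  have key : ((α + β + 1) / (α + β) ^ 2) ^ 2 <
      (β * (2 * α * (α + β) + (α + β) + α) / (2 * α ^ 2 * (α + β) ^ 2)) *
      (α * (2 * β * (α + β) + (α + β) + β) / (2 * β ^ 2 * (α + β) ^ 2)) := by
    rw [div_mul_div_comm, div_pow, div_lt_div_iff₀ (by positivity) (by positivity)]
    have hP : (0:ℝ) < 2*α*β^3 + 2*α*β^4 + α^2*β^2 + 2*α^2*β^3 + 2*α^3*β + 2*α^3*β^2 + 2*α^4*β := by
      positivity
    have hs4 : (0:ℝ) < (α + β) ^ 4 := by positivity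
    nlinarith [mul_pos hP hs4]
  have hdet : I.det = A * B - (A + B) * T := by
    simp [I, Matrix.det_fin_two_of]
    ring
  have hprod : ((α + β + 1) / (α + β) ^ 2) ^ 2 < (A - T) * (B - T) := by
    calc ((α + β + 1) / (α + β) ^ 2) ^ 2 < _ := key
    _ ≤ (A - T) * (B - T) := by
        apply mul_le_mul hAT hBT (le_of_lt hDBpos) (by linarith)
  have hT2 : T ^ 2 ≤ ((α + β + 1) / (α + β) ^ 2) ^ 2 := by
    apply pow_le_pow_left₀ hT0.le hTU
  have hdetpos : 0 < I.det := by
    rw [hdet]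
    nlinarith [hprod, hT2]
  refine ⟨hdet, hdetpos, isUnit_iff_ne_zero.mpr hdetpos.ne', ?_⟩
  apply Matrix.inv_eq_right_inv
  have hc : (A + B) * T - A * B ≠ 0 := by
    intro h
    rw [hdet] at hdetpos
    linarith [hdetpos]
  ext i j
  fin_cases i <;> fin_cases j <;>
    simp [I, Matrix.mul_apply, Fin.sum_univ_succ, Matrix.one_apply, Matrix.smul_apply] <;>
    field_simp <;>
    ring
end

section
/- The trigamma function satisfies Ψ₁(α)Ψ₁(β) > (Ψ₁(α)+Ψ₁(β))·Ψ₁(α+β) for all α,β>0. -/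
/-!
Expand every product of trigamma values as a double series over `ℕ × ℕ`. For
`Ψ₁(x) Ψ₁(x + y)`, split the index pairs `(m, k)` into `m ≤ k` and `k < m`: this gives
`L(x, y) + U(x, y)` (`trigammaLowerSum`, `trigammaUpperSum`). For `Ψ₁(α) Ψ₁(β)`, the partial
fraction identity `1/(ab)² = (1/a + 1/b)² / (a + b)²` with `a = α + m`, `b = β + n` gives
`L(α, β) + L(β, α) + C(α, β) + C(β, α)`, where `C(x, y) = ∑ 2 / ((x + m) (x + y + m + n)³)`
(`trigammaCubeSum`). So it suffices that `U(x, y) < C(x, y)`. Summing out the inner index,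
`U(x, y) = ∑ₖ Ψ₁(x + k + 1) / (x + y + k)² ≤ ∑ₖ 1 / ((x + k) (x + y + k)²) < C(x, y)`, by the
telescoping bounds `Ψ₁(z + 1) ≤ ∑ (1/(z + n) - 1/(z + n + 1)) = 1/z` and
`1/z² = ∑ (1/(z + n)² - 1/(z + n + 1)²) < ∑ 2/(z + n)³`.
-/

open Filter Topology

theorem summable_one_div_add_pow (x : ℝ) {p : ℕ} (hp : 1 < p) :
    Summable fun n : ℕ => 1 / (x + n) ^ p := by
  refine summable_abs_iff.1 (((Real.summable_one_div_nat_add_rpow x p).2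
    (by exact_mod_cast hp)).congr fun n => ?_)
  rw [Real.rpow_natCast, abs_div, abs_one, abs_pow, add_comm]

theorem summable_one_div_add_mul_one_div_add_sq {x : ℝ} (hx : 0 < x) (z : ℝ) :
    Summable fun k : ℕ => 1 / (x + k) * (1 / (z + k) ^ 2) :=
  ((summable_one_div_add_pow z one_lt_two).mul_left (1 / x)).of_nonneg_of_le
    (fun _ => by positivity) fun k => by gcongr; linarith [k.cast_nonneg (α := ℝ)]

theorem summable_one_div_add_sq_mul_one_div_add_sq (x y : ℝ) :
    Summable fun p : ℕ × ℕ => 1 / (x + p.1) ^ 2 * (1 / (y + p.2) ^ 2) :=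
  (summable_one_div_add_pow x one_lt_two).mul_of_nonneg (summable_one_div_add_pow y one_lt_two)
    (fun _ => by positivity) (fun _ => by positivity)

theorem summable_one_div_add_mul_two_div_add_cube {x y : ℝ} (hx : 0 < x) (hy : 0 < y) :
    Summable fun p : ℕ × ℕ => 1 / (x + p.1) * (2 / (x + y + ↑(p.1 + p.2)) ^ 3) := by
  refine Summable.of_nonneg_of_le (fun _ => by positivity) (fun p => ?_)
    ((summable_one_div_add_sq_mul_one_div_add_sq x y).mul_left 2)
  have hsum : x + y + ↑(p.1 + p.2) = (x + p.1) + (y + p.2) := by push_cast; ring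
  rw [hsum]
  set a : ℝ := x + p.1
  set b : ℝ := y + p.2
  have ha : 0 < a := by positivity
  have hb : 0 < b := by positivity
  calc 1 / a * (2 / (a + b) ^ 3) = 2 / (a * (a + b) * (a + b) ^ 2) := by field_simp
    _ ≤ 2 / (a * a * b ^ 2) := by gcongr <;> linarith
    _ = 2 * (1 / a ^ 2 * (1 / b ^ 2)) := by field_simp

theorem trigamma_mul_trigamma_eq_tsum (x y : ℝ) :
    trigamma x * trigamma y = ∑' p : ℕ × ℕ, 1 / (x + p.1) ^ 2 * (1 / (y + p.2) ^ 2) :=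
  (summable_one_div_add_pow x one_lt_two).tsum_mul_tsum (summable_one_div_add_pow y one_lt_two)
    (summable_one_div_add_sq_mul_one_div_add_sq x y)

theorem hasSum_sub_succ_of_antitone {g : ℕ → ℝ} (hg : Antitone g)
    (hlim : Tendsto g atTop (𝓝 0)) : HasSum (fun n => g n - g (n + 1)) (g 0) := by
  rw [hasSum_iff_tendsto_nat_of_nonneg fun n => sub_nonneg.2 (hg n.le_succ)]
  simp only [Finset.sum_range_sub']
  simpa using tendsto_const_nhds.sub hlim

theorem hasSum_one_div_add_pow_sub_succ {z : ℝ} (hz : 0 < z) {p : ℕ} (hp : p ≠ 0) :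
    HasSum (fun n : ℕ => 1 / (z + n) ^ p - 1 / (z + n + 1) ^ p) (1 / z ^ p) := by
  have hanti : Antitone fun n : ℕ => 1 / (z + n) ^ p := fun m n hmn => by
    dsimp only
    gcongr
  have hlim : Tendsto (fun n : ℕ => 1 / (z + n) ^ p) atTop (𝓝 0) := by
    simpa only [one_div, Pi.inv_def, Function.comp_def] using ((tendsto_pow_atTop hp).comp
      (tendsto_atTop_add_const_left atTop z tendsto_natCast_atTop_atTop)).inv_tendsto_atTop
  simpa [add_assoc] using hasSum_sub_succ_of_antitone hanti hlim

theorem trigamma_add_one_le {z : ℝ} (hz : 0 < z) : trigamma (z + 1) ≤ 1 / z := by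
  have htel := hasSum_one_div_add_pow_sub_succ hz one_ne_zero
  simp only [pow_one] at htel
  refine (summable_one_div_add_pow (z + 1) one_lt_two).tsum_le_tsum (fun n => ?_) htel.summable
    |>.trans_eq htel.tsum_eq
  have hzn : 0 < z + n := by positivity
  rw [div_sub_div _ _ hzn.ne' (by positivity), div_le_div_iff₀ (by positivity) (by positivity)]
  nlinarith

theorem one_div_sq_lt_tsum_two_div_add_cube {z : ℝ} (hz : 0 < z) :
    1 / z ^ 2 < ∑' n : ℕ, 2 / (z + n) ^ 3 := by
  have htel := hasSum_one_div_add_pow_sub_succ hz two_ne_zero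
  have hlt (n : ℕ) : 1 / (z + n) ^ 2 - 1 / (z + n + 1) ^ 2 < 2 / (z + n) ^ 3 := by
    have hzn : 0 < z + n := by positivity
    rw [div_sub_div _ _ (by positivity) (by positivity),
      div_lt_div_iff₀ (by positivity) (by positivity)]
    nlinarith [pow_pos hzn 3]
  rw [← htel.tsum_eq]
  exact htel.summable.tsum_lt_tsum (i := 0) (fun n => (hlt n).le) (hlt 0)
    ((summable_one_div_add_pow z (by norm_num)).mul_left 2 |>.congr fun n => mul_one_div _ _)

theorem one_div_sq_mul_one_div_sq_eq {K : Type*} [Field K] {a b : K} (ha : a ≠ 0) (hb : b ≠ 0)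
    (hab : a + b ≠ 0) :
    1 / a ^ 2 * (1 / b ^ 2) =
      1 / a ^ 2 * (1 / (a + b) ^ 2) + 1 / b ^ 2 * (1 / (b + a) ^ 2) +
        1 / a * (2 / (a + b) ^ 3) + 1 / b * (2 / (b + a) ^ 3) := by
  rw [add_comm b a]
  field_simp
  ring

namespace Nat

def pairFstLeSnd (p : ℕ × ℕ) : ℕ × ℕ := (p.1, p.1 + p.2)

def pairSndLtFst (p : ℕ × ℕ) : ℕ × ℕ := (p.1 + p.2 + 1, p.1)

theorem pairFstLeSnd_injective : Function.Injective pairFstLeSnd := by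
  rintro ⟨a, b⟩ ⟨c, d⟩ h
  simp only [pairFstLeSnd, Prod.mk.injEq] at h
  exact Prod.ext h.1 (by omega)

theorem pairSndLtFst_injective : Function.Injective pairSndLtFst := by
  rintro ⟨a, b⟩ ⟨c, d⟩ h
  simp only [pairSndLtFst, Prod.mk.injEq] at h
  exact Prod.ext h.2 (by omega)

theorem range_pairSndLtFst : Set.range pairSndLtFst = (Set.range pairFstLeSnd)ᶜ := by
  ext ⟨m, k⟩
  simp only [Set.mem_range, Set.mem_compl_iff, pairFstLeSnd, pairSndLtFst, Prod.mk.injEq,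
    Prod.exists, not_exists, not_and]
  constructor
  · rintro ⟨a, b, rfl, rfl⟩ c d rfl
    omega
  · intro h
    exact ⟨k, m - k - 1, by have := h m (k - m) rfl; omega, rfl⟩

end Nat

theorem Summable.tsum_prod_nat_eq_add {α : Type*} [UniformSpace α] [AddCommGroup α]
    [IsUniformAddGroup α] [CompleteSpace α] [T2Space α] {f : ℕ × ℕ → α} (hf : Summable f) :
    ∑' p, f p = ∑' p, f (Nat.pairFstLeSnd p) + ∑' p, f (Nat.pairSndLtFst p) := by
  rw [← hf.tsum_subtype_add_tsum_subtype_compl (Set.range Nat.pairFstLeSnd),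
    ← Nat.range_pairSndLtFst, tsum_range f Nat.pairFstLeSnd_injective,
    tsum_range f Nat.pairSndLtFst_injective]

noncomputable def trigammaLowerSum (x y : ℝ) : ℝ :=
  ∑' p : ℕ × ℕ, 1 / (x + p.1) ^ 2 * (1 / (x + y + ↑(p.1 + p.2)) ^ 2)

noncomputable def trigammaUpperSum (x y : ℝ) : ℝ :=
  ∑' p : ℕ × ℕ, 1 / (x + ↑(p.1 + p.2 + 1)) ^ 2 * (1 / (x + y + p.1) ^ 2)

noncomputable def trigammaCubeSum (x y : ℝ) : ℝ :=
  ∑' p : ℕ × ℕ, 1 / (x + p.1) * (2 / (x + y + ↑(p.1 + p.2)) ^ 3)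

theorem trigamma_mul_trigamma_add_eq_lower_add_upper (x y : ℝ) :
    trigamma x * trigamma (x + y) = trigammaLowerSum x y + trigammaUpperSum x y := by
  rw [trigamma_mul_trigamma_eq_tsum,
    (summable_one_div_add_sq_mul_one_div_add_sq x (x + y)).tsum_prod_nat_eq_add]
  rfl

theorem trigamma_mul_trigamma_eq_lower_add_cube {x y : ℝ} (hx : 0 < x) (hy : 0 < y) :
    trigamma x * trigamma y = trigammaLowerSum x y + trigammaLowerSum y x +
      trigammaCubeSum x y + trigammaCubeSum y x := by
  have hLower (x y : ℝ) : HasSum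
      (fun p : ℕ × ℕ => 1 / (x + p.1) ^ 2 * (1 / (x + y + ↑(p.1 + p.2)) ^ 2))
      (trigammaLowerSum x y) :=
    ((summable_one_div_add_sq_mul_one_div_add_sq x (x + y)).comp_injective
      Nat.pairFstLeSnd_injective).hasSum
  have hCube {x y : ℝ} (hx : 0 < x) (hy : 0 < y) : HasSum
      (fun p : ℕ × ℕ => 1 / (x + p.1) * (2 / (x + y + ↑(p.1 + p.2)) ^ 3))
      (trigammaCubeSum x y) :=
    (summable_one_div_add_mul_two_div_add_cube hx hy).hasSum
  have hSwap {f : ℕ × ℕ → ℝ} {s : ℝ} (h : HasSum f s) : HasSum (fun p : ℕ × ℕ => f p.swap) s :=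
    (Equiv.prodComm ℕ ℕ).hasSum_iff.2 h
  rw [trigamma_mul_trigamma_eq_tsum]
  refine HasSum.tsum_eq ?_
  convert (((hLower x y).add (hSwap (hLower y x))).add (hCube hx hy)).add
    (hSwap (hCube hy hx)) using 2 with p
  have hxy : x + y + ↑(p.1 + p.2) = (x + p.1) + (y + p.2) := by push_cast; ring
  have hyx : y + x + ↑(p.2 + p.1) = (y + p.2) + (x + p.1) := by push_cast; ring
  simp only [Prod.fst_swap, Prod.snd_swap, hxy, hyx]
  exact one_div_sq_mul_one_div_sq_eq (by positivity) (by positivity) (by positivity)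

theorem trigammaUpperSum_le {x : ℝ} (hx : 0 < x) (y : ℝ) :
    trigammaUpperSum x y ≤ ∑' k : ℕ, 1 / (x + k) * (1 / (x + y + k) ^ 2) := by
  have hsum : Summable fun p : ℕ × ℕ =>
      1 / (x + ↑(p.1 + p.2 + 1)) ^ 2 * (1 / (x + y + p.1) ^ 2) :=
    (summable_one_div_add_sq_mul_one_div_add_sq x (x + y)).comp_injective
      (i := Nat.pairSndLtFst) Nat.pairSndLtFst_injective
  have hinner (k : ℕ) : ∑' j : ℕ, 1 / (x + ↑(k + j + 1)) ^ 2 * (1 / (x + y + k) ^ 2) =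
      trigamma (x + k + 1) * (1 / (x + y + k) ^ 2) := by
    rw [tsum_mul_right, trigamma]
    congr 1
    exact tsum_congr fun j => by push_cast; ring_nf
  have hle (k : ℕ) : ∑' j : ℕ, 1 / (x + ↑(k + j + 1)) ^ 2 * (1 / (x + y + k) ^ 2) ≤
      1 / (x + k) * (1 / (x + y + k) ^ 2) := by
    rw [hinner]
    gcongr
    exact trigamma_add_one_le (by positivity)
  rw [trigammaUpperSum, hsum.tsum_prod]
  exact Summable.tsum_le_tsum hle hsum.prod (summable_one_div_add_mul_one_div_add_sq hx (x + y))

theorem tsum_lt_trigammaCubeSum {x y : ℝ} (hx : 0 < x) (hy : 0 < y) :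
    ∑' k : ℕ, 1 / (x + k) * (1 / (x + y + k) ^ 2) < trigammaCubeSum x y := by
  have hsum := summable_one_div_add_mul_two_div_add_cube hx hy
  have hinner (m : ℕ) : ∑' n : ℕ, 1 / (x + m) * (2 / (x + y + ↑(m + n)) ^ 3) =
      1 / (x + m) * ∑' n : ℕ, 2 / (x + y + m + n) ^ 3 := by
    rw [tsum_mul_left]
    congr 1
    exact tsum_congr fun n => by push_cast; ring_nf
  have hlt (m : ℕ) : 1 / (x + m) * (1 / (x + y + m) ^ 2) <
      ∑' n : ℕ, 1 / (x + m) * (2 / (x + y + ↑(m + n)) ^ 3) := by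
    rw [hinner]
    gcongr
    exact one_div_sq_lt_tsum_two_div_add_cube (by positivity)
  rw [trigammaCubeSum, hsum.tsum_prod]
  exact Summable.tsum_lt_tsum (fun m => (hlt m).le) (hlt 0)
    (summable_one_div_add_mul_one_div_add_sq hx (x + y)) hsum.prod

theorem trigammaUpperSum_lt_trigammaCubeSum {x y : ℝ} (hx : 0 < x) (hy : 0 < y) :
    trigammaUpperSum x y < trigammaCubeSum x y :=
  (trigammaUpperSum_le hx y).trans_lt (tsum_lt_trigammaCubeSum hx hy)

theorem trigamma_superadditive_inequality (α β : ℝ) (hα : 0 < α) (hβ : 0 < β) :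
    (trigamma α + trigamma β) * trigamma (α + β) < trigamma α * trigamma β := by
  have hα' := trigamma_mul_trigamma_add_eq_lower_add_upper α β
  have hβ' := trigamma_mul_trigamma_add_eq_lower_add_upper β α
  rw [add_comm β α] at hβ'
  rw [add_mul, hα', hβ', trigamma_mul_trigamma_eq_lower_add_cube hα hβ]
  linarith [trigammaUpperSum_lt_trigammaCubeSum hα hβ, trigammaUpperSum_lt_trigammaCubeSum hβ hα]
end

section
/- Let X be a [0,1]-valued random variable and α,β>0. Define Δ_{α,β} = ∫_0^1 |(α+β)·E[X·1{X≥t}] − α·P(X≥t) − t^α(1−t)^β/B(α,β)|² dt. Then Δ_{α,β} = 0 if and only if X ~ Beta(α,β). -/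
/-
Let `μ` be the law of `X` and `h x = (α + β) x - α`. The bracket in `Δ` is
`∫_{[t,∞)} h dμ - t^α (1-t)^β / B(α, β)`, and since `-x^α (1-x)^β / B(α, β)` is a primitive of
`h` times the Beta density, the second term is the same tail integral for the Beta law. So `Δ = 0`
says that the tails `t ↦ ∫_{[t,∞)} h` of `μ` and of the Beta law agree for a.e. `t ∈ (0, 1]`;
both are left-continuous in `t`, so they agree for every `t > 0`. These tails determine the signed
measure `h • μ` on `(0, ∞)`, hence `μ` on `(0, ∞) \ {α / (α + β)}`, a set of full Beta measure;
as both laws are probability measures, they coincide.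
-/

open MeasureTheory Set

noncomputable def betaMeasure (a b : ℝ) : Measure ℝ :=
  volume.withDensity fun x =>
    ENNReal.ofReal (Set.indicator (Set.Icc (0:ℝ) 1)
      (fun x => x ^ (a - 1) * (1 - x) ^ (b - 1) / betaFun a b) x)

open Filter Topology
open scoped ENNReal

section General

variable {α : Type*} [MeasurableSpace α]

theorem MeasureTheory.Measure.restrict_eq_of_withDensity_add_eq {μ₁ μ₂ ν₁ ν₂ : Measure α}
    {f g : α → ℝ≥0∞} {s : Set α} (hs : MeasurableSet s) (hf : Measurable f)
    (hf_pos : ∀ x ∈ s, f x ≠ 0) (hf_top : ∀ x, f x ≠ ∞)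
    (hg : ∀ x ∈ s, g x = 0)
    (h : μ₁.withDensity f + ν₁.withDensity g = μ₂.withDensity f + ν₂.withDensity g) :
    μ₁.restrict s = μ₂.restrict s := by
  have key : ∀ μ ν : Measure α,
      ((μ.withDensity f + ν.withDensity g).restrict s).withDensity (fun x => (f x)⁻¹)
        = μ.restrict s := by
    intro μ ν
    have hνg : (ν.restrict s).withDensity g = 0 := by
      rw [withDensity_congr_ae (ae_restrict_of_forall_mem hs hg), ← Pi.zero_def, withDensity_zero]
    rw [Measure.restrict_add, restrict_withDensity hs, restrict_withDensity hs, hνg, add_zero,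
      withDensity_inv_same hf (ae_restrict_of_forall_mem hs hf_pos) (ae_of_all _ hf_top)]
  rw [← key μ₁ ν₁, h, key]

theorem MeasureTheory.Measure.eq_of_restrict_eq_of_ae_mem {μ ν : Measure α} [IsProbabilityMeasure μ]
    [IsProbabilityMeasure ν] {s : Set α} (hs : MeasurableSet s)
    (h : μ.restrict s = ν.restrict s) (hν : ∀ᵐ x ∂ν, x ∈ s) : μ = ν := by
  have hμs : μ s = 1 := by
    rw [← Measure.restrict_apply_univ, h, Measure.restrict_apply_univ,
      ← prob_compl_eq_zero_iff hs, ← ae_iff.1 hν]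
    rfl
  have hμ : ∀ᵐ x ∂μ, x ∈ s := ae_iff.2 ((prob_compl_eq_zero_iff hs).2 hμs)
  rw [← Measure.restrict_eq_self_of_ae_mem hμ, h, Measure.restrict_eq_self_of_ae_mem hν]

variable {μ : Measure α} {f : α → ℝ}

theorem tendsto_setIntegral_of_eventually_mem_iff {ι : Type*} {l : Filter ι}
    [l.IsCountablyGenerated] {s : ι → Set α} {t : Set α}
    (hs : ∀ i, MeasurableSet (s i)) (ht : MeasurableSet t) (hf : Integrable f μ)
    (hst : ∀ x, ∀ᶠ i in l, x ∈ s i ↔ x ∈ t) :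
    Tendsto (fun i => ∫ x in s i, f x ∂μ) l (𝓝 (∫ x in t, f x ∂μ)) := by
  simp_rw [← integral_indicator (hs _), ← integral_indicator ht]
  refine tendsto_integral_filter_of_dominated_convergence (fun x => ‖f x‖)
    (Eventually.of_forall fun i => hf.aestronglyMeasurable.indicator (hs i))
    (Eventually.of_forall fun i => ae_of_all _ fun x => norm_indicator_le_norm_self _ _)
    hf.norm (ae_of_all _ fun x => tendsto_const_nhds.congr' ?_)
  filter_upwards [hst x] with i hi
  by_cases hx : x ∈ t <;> simp [hx, hi]

theorem norm_setIntegral_le_integral_norm (hf : Integrable f μ) (s : Set α) :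
    ‖∫ x in s, f x ∂μ‖ ≤ ∫ x, ‖f x‖ ∂μ :=
  (norm_integral_le_integral_norm _).trans
    (setIntegral_le_integral hf.norm (ae_of_all _ fun _ => norm_nonneg _))

end General

section TailIntegral

variable {μ ν : Measure ℝ} {f : ℝ → ℝ} {a b : ℝ}

theorem continuousWithinAt_setIntegral_Ici (hf : Integrable f μ) (t : ℝ) :
    ContinuousWithinAt (fun s => ∫ x in Ici s, f x ∂μ) (Iio t) t := by
  refine tendsto_setIntegral_of_eventually_mem_iff (fun _ => measurableSet_Ici)
    measurableSet_Ici hf fun x => ?_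
  rcases lt_or_ge x t with hxt | htx
  · filter_upwards [Ioo_mem_nhdsLT hxt] with s hs
    simp [hs.1.not_ge, hxt.not_ge]
  · filter_upwards [self_mem_nhdsWithin] with s (hs : s < t)
    simp [htx, hs.le.trans htx]

theorem tendsto_setIntegral_Ici_nhdsGT (hf : Integrable f μ) (a : ℝ) :
    Tendsto (fun s => ∫ x in Ici s, f x ∂μ) (𝓝[>] a) (𝓝 (∫ x in Ioi a, f x ∂μ)) := by
  refine tendsto_setIntegral_of_eventually_mem_iff (fun _ => measurableSet_Ici)
    measurableSet_Ioi hf fun x => ?_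
  rcases lt_or_ge a x with hax | hxa
  · filter_upwards [Ioo_mem_nhdsGT hax] with s hs
    simp [hs.2.le, hax]
  · filter_upwards [self_mem_nhdsWithin] with s (hs : a < s)
    simp [hxa.not_gt, (hxa.trans_lt hs).not_ge]

theorem setIntegral_Ici_restrict_Ioi_eq (hμ : Integrable f μ) (hν : Integrable f ν)
    (heq : ∀ t, a < t → ∫ x in Ici t, f x ∂μ = ∫ x in Ici t, f x ∂ν) (t : ℝ) :
    ∫ x in Ici t, f x ∂μ.restrict (Ioi a) = ∫ x in Ici t, f x ∂ν.restrict (Ioi a) := by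
  simp only [Measure.restrict_restrict measurableSet_Ici]
  rcases lt_or_ge a t with hat | hta
  · rw [inter_eq_left.2 (Ici_subset_Ioi.2 hat), heq t hat]
  · rw [inter_eq_right.2 (Ioi_subset_Ici_iff.2 hta)]
    exact tendsto_nhds_unique_of_eventuallyEq (tendsto_setIntegral_Ici_nhdsGT hμ a)
      (tendsto_setIntegral_Ici_nhdsGT hν a) (eventually_nhdsWithin_of_forall heq)

theorem measurable_setIntegral_Ici [SFinite μ] (hf : Measurable f) :
    Measurable fun t => ∫ x in Ici t, f x ∂μ := by
  simp_rw [← integral_indicator measurableSet_Ici]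
  refine (StronglyMeasurable.integral_prod_right'
    (f := fun p : ℝ × ℝ => (Ici p.1).indicator f p.2) ?_).measurable
  exact (Measurable.ite (measurableSet_le measurable_fst measurable_snd)
    (hf.comp measurable_snd) measurable_const).stronglyMeasurable

theorem intervalIntegral_sq_abs_sub_setIntegral_Ici_eq_zero_iff [IsFiniteMeasure μ]
    [IsFiniteMeasure ν] (hf : Measurable f) (hμ : Integrable f μ) (hν : Integrable f ν)
    (hab : a ≤ b) :
    (∫ t in a..b, |∫ x in Ici t, f x ∂μ - ∫ x in Ici t, f x ∂ν| ^ 2) = 0 ↔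
      ∀ᵐ t, t ∈ Ioc a b → ∫ x in Ici t, f x ∂μ = ∫ x in Ici t, f x ∂ν := by
  set C := ∫ x, ‖f x‖ ∂μ + ∫ x, ‖f x‖ ∂ν
  have hbound : ∀ t, |∫ x in Ici t, f x ∂μ - ∫ x in Ici t, f x ∂ν| ≤ C := fun t =>
    (abs_sub _ _).trans (add_le_add (norm_setIntegral_le_integral_norm hμ _)
      (norm_setIntegral_le_integral_norm hν _))
  have hint : IntervalIntegrable
      (fun t => |∫ x in Ici t, f x ∂μ - ∫ x in Ici t, f x ∂ν| ^ 2) volume a b :=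
    (intervalIntegrable_const (c := C ^ 2)).mono_fun'
      (((measurable_setIntegral_Ici hf).sub (measurable_setIntegral_Ici hf)).abs.pow_const
        2).aestronglyMeasurable
      (ae_of_all _ fun t => by
        simpa using pow_le_pow_left₀ (abs_nonneg _) (hbound t) 2)
  rw [intervalIntegral.integral_eq_zero_iff_of_le_of_nonneg_ae hab
    (ae_of_all _ fun t => by positivity) hint, EventuallyEq,
    ae_restrict_iff' measurableSet_Ioc]
  simp [sub_eq_zero]

theorem withDensity_ofReal_add_eq_of_setIntegral_Ici_eq [IsFiniteMeasure μ] [IsFiniteMeasure ν]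
    (hμ : Integrable f μ) (hν : Integrable f ν)
    (heq : ∀ t, ∫ x in Ici t, f x ∂μ = ∫ x in Ici t, f x ∂ν) :
    μ.withDensity (fun x => ENNReal.ofReal (f x)) + ν.withDensity (fun x => ENNReal.ofReal (-f x))
      = ν.withDensity (fun x => ENNReal.ofReal (f x))
        + μ.withDensity (fun x => ENNReal.ofReal (-f x)) := by
  set pos : Measure ℝ → Measure ℝ := fun m => m.withDensity fun x => ENNReal.ofReal (f x)
  set neg : Measure ℝ → Measure ℝ := fun m => m.withDensity fun x => ENNReal.ofReal (-f x)
  have : IsFiniteMeasure (pos μ) := isFiniteMeasure_withDensity_ofReal hμ.2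
  have : IsFiniteMeasure (pos ν) := isFiniteMeasure_withDensity_ofReal hν.2
  have : IsFiniteMeasure (neg μ) := isFiniteMeasure_withDensity_ofReal hμ.neg.2
  have : IsFiniteMeasure (neg ν) := isFiniteMeasure_withDensity_ofReal hν.neg.2
  show pos μ + neg ν = pos ν + neg μ
  refine Measure.ext_of_Ici _ _ fun t => ?_
  have hreal : (pos μ (Ici t)).toReal - (neg μ (Ici t)).toReal
      = (pos ν (Ici t)).toReal - (neg ν (Ici t)).toReal := by
    simpa only [pos, neg, withDensity_apply _ measurableSet_Ici,
      integral_eq_lintegral_pos_part_sub_lintegral_neg_part hμ.integrableOn,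
      integral_eq_lintegral_pos_part_sub_lintegral_neg_part hν.integrableOn] using heq t
  rw [Measure.add_apply, Measure.add_apply, ← ENNReal.toReal_eq_toReal_iff' (by finiteness)
    (by finiteness), ENNReal.toReal_add (by finiteness) (by finiteness),
    ENNReal.toReal_add (by finiteness) (by finiteness)]
  linarith

theorem restrict_eq_of_setIntegral_Ici_eq [IsFiniteMeasure μ] [IsFiniteMeasure ν]
    (hf : Measurable f) (hμ : Integrable f μ) (hν : Integrable f ν)
    (heq : ∀ t, ∫ x in Ici t, f x ∂μ = ∫ x in Ici t, f x ∂ν) :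
    μ.restrict {x | f x ≠ 0} = ν.restrict {x | f x ≠ 0} := by
  have hjordan := withDensity_ofReal_add_eq_of_setIntegral_Ici_eq hμ hν heq
  have hf_pos : MeasurableSet {x | 0 < f x} := measurableSet_lt measurable_const hf
  have hf_neg : MeasurableSet {x | f x < 0} := measurableSet_lt hf measurable_const
  have hpos : μ.restrict {x | 0 < f x} = ν.restrict {x | 0 < f x} :=
    Measure.restrict_eq_of_withDensity_add_eq hf_pos hf.ennreal_ofReal
      (fun x hx => (ENNReal.ofReal_pos.2 hx).ne') (fun _ => ENNReal.ofReal_ne_top)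
      (fun x (hx : 0 < f x) => ENNReal.ofReal_eq_zero.2 (by linarith)) hjordan
  have hneg : μ.restrict {x | f x < 0} = ν.restrict {x | f x < 0} :=
    Measure.restrict_eq_of_withDensity_add_eq (f := fun x => ENNReal.ofReal (-f x))
      (ν₁ := ν) (ν₂ := μ) hf_neg hf.neg.ennreal_ofReal
      (fun x (hx : f x < 0) => (ENNReal.ofReal_pos.2 (neg_pos.2 hx)).ne')
      (fun _ => ENNReal.ofReal_ne_top) (fun x (hx : f x < 0) => ENNReal.ofReal_eq_zero.2 hx.le)
      (by rw [add_comm, ← hjordan, add_comm])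
  have hsplit : {x | f x ≠ 0} = {x | f x < 0} ∪ {x | 0 < f x} := by
    ext x
    exact ne_iff_lt_or_gt
  have hdisj : Disjoint {x | f x < 0} {x | 0 < f x} :=
    disjoint_left.2 fun x (h₁ : f x < 0) (h₂ : 0 < f x) => h₁.not_gt h₂
  rw [hsplit, Measure.restrict_union hdisj hf_pos, Measure.restrict_union hdisj hf_pos, hpos,
    hneg]

theorem Continuous.integrable_of_ae_mem_Icc [IsFiniteMeasure μ] (hf : Continuous f)
    (hμ : ∀ᵐ x ∂μ, x ∈ Icc a b) : Integrable f μ := by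
  have := hf.integrableOn_Icc (μ := μ) (a := a) (b := b)
  rwa [IntegrableOn, Measure.restrict_eq_self_of_ae_mem hμ] at this

theorem setIntegral_Ici_eq_zero_of_ae_mem_Icc (hμ : ∀ᵐ x ∂μ, x ∈ Icc a b) {t : ℝ} (ht : b < t) :
    ∫ x in Ici t, f x ∂μ = 0 :=
  setIntegral_measure_zero _ <| measure_mono_null
    (fun x (hxt : t ≤ x) (hx : x ∈ Icc a b) => (ht.trans_le hxt).not_ge hx.2) (ae_iff.1 hμ)

end TailIntegral

theorem eqOn_Ioc_of_ae_eq_of_continuousWithinAt_Iio {f g : ℝ → ℝ} {a b : ℝ}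
    (hfg : ∀ᵐ t, t ∈ Ioc a b → f t = g t) (hf : ∀ t, ContinuousWithinAt f (Iio t) t)
    (hg : ∀ t, ContinuousWithinAt g (Iio t) t) : EqOn f g (Ioc a b) := by
  intro t ht
  refine tendsto_nhds_unique_of_frequently_eq (hf t) (hg t) fun hne => ?_
  obtain ⟨l, hlt, hl⟩ := mem_nhdsLT_iff_exists_Ioo_subset.1 hne
  have hnull : volume (Ioo (max a l) t) = 0 := measure_mono_null
    (fun s hs => fun hfgs => hl ⟨(le_max_right _ _).trans_lt hs.1, hs.2⟩
      (hfgs ⟨(le_max_left _ _).trans_lt hs.1, hs.2.le.trans ht.2⟩)) (ae_iff.1 hfg)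
  have hlt : l < t := hlt
  rw [Real.volume_Ioo, ENNReal.ofReal_eq_zero, sub_nonpos, le_max_iff] at hnull
  rcases hnull with h | h <;> linarith [ht.1]

theorem setIntegral_Ici_map {Ω : Type*} [MeasurableSpace Ω] {P : Measure Ω} [IsFiniteMeasure P]
    {X : Ω → ℝ} (hX : Measurable X) (hXi : Integrable X P) (c d t : ℝ) :
    c * (∫ ω in {w | t ≤ X w}, X ω ∂P) - d * (P {w | t ≤ X w}).toReal
      = ∫ x in Ici t, (c * x - d) ∂P.map X := by
  have hid : Integrable (fun x => x) (P.map X) :=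
    (integrable_map_measure aestronglyMeasurable_id hX.aemeasurable).2 hXi
  rw [integral_sub (hid.integrableOn.const_mul c) (integrableOn_const (by finiteness)),
    integral_const_mul, setIntegral_const, setIntegral_map (f := fun x => x) measurableSet_Ici
      aestronglyMeasurable_id hX.aemeasurable, measureReal_def,
    Measure.map_apply hX measurableSet_Ici, smul_eq_mul, mul_comm _ d]
  rfl

section Beta

variable {a b : ℝ}

noncomputable def betaDensity (a b : ℝ) : ℝ → ℝ :=
  (Icc 0 1).indicator fun x => x ^ (a - 1) * (1 - x) ^ (b - 1) / betaFun a b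

theorem betaMeasure_eq_withDensity (a b : ℝ) :
    betaMeasure a b = volume.withDensity fun x => ENNReal.ofReal (betaDensity a b x) :=
  rfl

theorem measurable_betaDensity (a b : ℝ) : Measurable (betaDensity a b) :=
  (Measurable.div_const (by fun_prop) _).indicator measurableSet_Icc

theorem betaDensity_nonneg (ha : 0 < a) (hb : 0 < b) (x : ℝ) : 0 ≤ betaDensity a b x := by
  -- `betaFun` is definitionally Mathlib's `ProbabilityTheory.beta`
  have hB : 0 < betaFun a b := ProbabilityTheory.beta_pos ha hb
  refine indicator_nonneg (fun y hy => ?_) x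
  have : 0 ≤ 1 - y := sub_nonneg.2 hy.2
  have : 0 ≤ y := hy.1
  positivity

theorem betaMeasure_eq_probabilityTheory_betaMeasure (a b : ℝ) :
    betaMeasure a b = ProbabilityTheory.betaMeasure a b := by
  refine withDensity_congr_ae ?_
  filter_upwards [volume.ae_ne 0, volume.ae_ne 1] with x h0 h1
  rw [ProbabilityTheory.betaPDF, ProbabilityTheory.betaPDFReal]
  congr 1
  by_cases hx : x ∈ Icc 0 1
  · rw [indicator_of_mem hx, if_pos ⟨hx.1.lt_of_ne' h0, hx.2.lt_of_ne h1⟩]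
    simp only [betaFun, ProbabilityTheory.beta]
    ring
  · rw [indicator_of_notMem hx, if_neg fun h => hx ⟨h.1.le, h.2.le⟩]

theorem isProbabilityMeasure_betaMeasure (ha : 0 < a) (hb : 0 < b) :
    IsProbabilityMeasure (betaMeasure a b) := by
  rw [betaMeasure_eq_probabilityTheory_betaMeasure]
  exact ProbabilityTheory.isProbabilityMeasureBeta ha hb

theorem integrable_betaDensity (ha : 0 < a) (hb : 0 < b) : Integrable (betaDensity a b) := by
  refine ⟨(measurable_betaDensity a b).aestronglyMeasurable,
    (hasFiniteIntegral_iff_ofReal (ae_of_all _ (betaDensity_nonneg ha hb))).2 ?_⟩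
  have := isProbabilityMeasure_betaMeasure ha hb
  rw [← setLIntegral_univ, ← withDensity_apply _ MeasurableSet.univ, ← betaMeasure_eq_withDensity]
  exact measure_lt_top _ _

theorem ae_mem_Icc_betaMeasure (a b : ℝ) : ∀ᵐ x ∂betaMeasure a b, x ∈ Icc (0 : ℝ) 1 := by
  refine (ae_withDensity_iff (measurable_betaDensity a b).ennreal_ofReal).2
    (ae_of_all _ fun x hx => ?_)
  by_contra hx'
  exact hx (by rw [betaDensity, indicator_of_notMem hx', ENNReal.ofReal_zero])

theorem hasDerivAt_rpow_mul_one_sub_rpow {x : ℝ} (hx : x ∈ Ioo 0 1) :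
    HasDerivAt (fun y => y ^ a * (1 - y) ^ b)
      (-(((a + b) * x - a) * (x ^ (a - 1) * (1 - x) ^ (b - 1)))) x := by
  have hx0 : 0 < x := hx.1
  have hx1 : 0 < 1 - x := sub_pos.2 hx.2
  have hleft := Real.hasDerivAt_rpow_const (p := a) (Or.inl hx0.ne')
  have hright := (Real.hasDerivAt_rpow_const (p := b) (Or.inl hx1.ne')).comp x
    ((hasDerivAt_id x).const_sub 1)
  refine (hleft.mul hright).congr_deriv ?_
  simp only [Function.comp_apply]
  rw [show x ^ a = x ^ (a - 1) * x by rw [← Real.rpow_add_one hx0.ne']; ring_nf,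
    show (1 - x) ^ b = (1 - x) ^ (b - 1) * (1 - x) by rw [← Real.rpow_add_one hx1.ne']; ring_nf]
  ring

theorem setIntegral_Ici_betaMeasure (ha : 0 < a) (hb : 0 < b) {t : ℝ} (ht : t ∈ Icc (0 : ℝ) 1) :
    ∫ x in Ici t, ((a + b) * x - a) ∂betaMeasure a b = t ^ a * (1 - t) ^ b / betaFun a b := by
  have hint : IntervalIntegrable (fun x => betaDensity a b x * ((a + b) * x - a)) volume t 1 := by
    rw [intervalIntegrable_iff_integrableOn_Icc_of_le ht.2]
    exact (integrable_betaDensity ha hb).integrableOn.mul_continuousOn (by fun_prop) isCompact_Icc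
  have hderiv : ∀ x ∈ Ioo t 1, HasDerivAt (fun y => -(y ^ a * (1 - y) ^ b) / betaFun a b)
      (betaDensity a b x * ((a + b) * x - a)) x := by
    intro x hx
    have hx01 : x ∈ Ioo 0 1 := ⟨ht.1.trans_lt hx.1, hx.2⟩
    have hdens : betaDensity a b x = x ^ (a - 1) * (1 - x) ^ (b - 1) / betaFun a b :=
      indicator_of_mem (Ioo_subset_Icc_self hx01) _
    refine ((hasDerivAt_rpow_mul_one_sub_rpow hx01).neg.div_const _).congr_deriv ?_
    rw [hdens]
    ring
  have hcont : ContinuousOn (fun y => -(y ^ a * (1 - y) ^ b) / betaFun a b) (Icc t 1) := by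
    fun_prop (disch := first | exact ha.le | exact hb.le)
  rw [betaMeasure_eq_withDensity, setIntegral_withDensity_eq_setIntegral_toReal_smul
      (measurable_betaDensity a b).ennreal_ofReal (ae_of_all _ fun _ => ENNReal.ofReal_lt_top)
      _ measurableSet_Ici]
  simp_rw [ENNReal.toReal_ofReal (betaDensity_nonneg ha hb _), smul_eq_mul]
  rw [setIntegral_eq_of_subset_of_forall_sdiff_eq_zero measurableSet_Ici Icc_subset_Ici_self
      fun x hx => ?_,
    integral_Icc_eq_integral_Ioc, ← intervalIntegral.integral_of_le ht.2]
  · rw [intervalIntegral.integral_eq_sub_of_hasDerivAt_of_le ht.2 hcont hderiv hint]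
    simp [Real.zero_rpow hb.ne']
    ring
  · have hx1 : x ∉ Icc 0 1 := fun h => hx.2 ⟨hx.1, h.2⟩
    simp [betaDensity, indicator_of_notMem hx1]

theorem ae_betaMeasure_pos_and_ne (ha : 0 < a) (hb : 0 < b) :
    ∀ᵐ x ∂betaMeasure a b, 0 < x ∧ (a + b) * x - a ≠ 0 := by
  have hac : betaMeasure a b ≪ volume := withDensity_absolutelyContinuous _ _
  filter_upwards [ae_mem_Icc_betaMeasure a b, hac.ae_le (volume.ae_ne 0),
    hac.ae_le (volume.ae_ne (a / (a + b)))] with x hx hx0 hxc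
  refine ⟨hx.1.lt_of_ne' hx0, fun hzero => hxc ?_⟩
  field_simp
  linarith

end Beta

theorem eq_betaMeasure_of_ae_setIntegral_Ici_eq {μ : Measure ℝ} [IsProbabilityMeasure μ]
    {a b : ℝ} (ha : 0 < a) (hb : 0 < b) (hμ : ∀ᵐ x ∂μ, x ∈ Icc (0 : ℝ) 1)
    (hae : ∀ᵐ t, t ∈ Ioc 0 1 →
      ∫ x in Ici t, ((a + b) * x - a) ∂μ = ∫ x in Ici t, ((a + b) * x - a) ∂betaMeasure a b) :
    μ = betaMeasure a b := by
  have := isProbabilityMeasure_betaMeasure ha hb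
  set h : ℝ → ℝ := fun x => (a + b) * x - a
  have hh : Continuous h := by fun_prop
  have hν := ae_mem_Icc_betaMeasure a b
  have hμh := hh.integrable_of_ae_mem_Icc hμ
  have hνh := hh.integrable_of_ae_mem_Icc hν
  have hIoc := eqOn_Ioc_of_ae_eq_of_continuousWithinAt_Iio hae
    (continuousWithinAt_setIntegral_Ici hμh) (continuousWithinAt_setIntegral_Ici hνh)
  have hpos : ∀ t, 0 < t → ∫ x in Ici t, h x ∂μ = ∫ x in Ici t, h x ∂betaMeasure a b := by
    intro t ht
    rcases le_or_gt t 1 with ht1 | ht1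
    · exact hIoc ⟨ht, ht1⟩
    · rw [setIntegral_Ici_eq_zero_of_ae_mem_Icc hμ ht1,
        setIntegral_Ici_eq_zero_of_ae_mem_Icc hν ht1]
  have hne : MeasurableSet {x | h x ≠ 0} := hh.measurable (measurableSet_singleton 0).compl
  have hrestrict := restrict_eq_of_setIntegral_Ici_eq hh.measurable hμh.restrict hνh.restrict
    (setIntegral_Ici_restrict_Ioi_eq hμh hνh hpos)
  rw [Measure.restrict_restrict hne, Measure.restrict_restrict hne] at hrestrict
  exact Measure.eq_of_restrict_eq_of_ae_mem (hne.inter measurableSet_Ioi) hrestrict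
    ((ae_betaMeasure_pos_and_ne ha hb).mono fun x hx => ⟨hx.2, hx.1⟩)

theorem delta_eq_zero_iff_beta
    {Ω : Type*} [MeasurableSpace Ω] (P : Measure Ω) [IsProbabilityMeasure P]
    (X : Ω → ℝ) (hX : Measurable X) (hrange : ∀ ω, X ω ∈ Set.Icc (0:ℝ) 1)
    (α β : ℝ) (hα : 0 < α) (hβ : 0 < β) :
    (∫ t in (0:ℝ)..1,
        |(α + β) * (∫ ω in {w : Ω | t ≤ X w}, X ω ∂P)
          - α * (P {w : Ω | t ≤ X w}).toReal
          - t ^ α * (1 - t) ^ β / betaFun α β| ^ 2) = 0 ↔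
      Measure.map X P = betaMeasure α β := by
  have : IsProbabilityMeasure (P.map X) := Measure.isProbabilityMeasure_map hX.aemeasurable
  have hμ : ∀ᵐ x ∂P.map X, x ∈ Icc (0 : ℝ) 1 :=
    (ae_map_iff hX.aemeasurable measurableSet_Icc).2 (ae_of_all _ hrange)
  have hh : Continuous fun x : ℝ => (α + β) * x - α := by fun_prop
  have hXi : Integrable X P := continuous_id.integrable_of_ae_mem_Icc hμ |>.comp_measurable hX
  have hΔ : ∀ t ∈ uIcc (0 : ℝ) 1,
      |(α + β) * (∫ ω in {w : Ω | t ≤ X w}, X ω ∂P) - α * (P {w : Ω | t ≤ X w}).toReal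
        - t ^ α * (1 - t) ^ β / betaFun α β| ^ 2
      = |∫ x in Ici t, ((α + β) * x - α) ∂P.map X
          - ∫ x in Ici t, ((α + β) * x - α) ∂betaMeasure α β| ^ 2 := by
    intro t ht
    rw [uIcc_of_le zero_le_one] at ht
    rw [setIntegral_Ici_map hX hXi, setIntegral_Ici_betaMeasure hα hβ ht]
  have := isProbabilityMeasure_betaMeasure hα hβ
  rw [intervalIntegral.integral_congr hΔ, intervalIntegral_sq_abs_sub_setIntegral_Ici_eq_zero_iff
    hh.measurable (hh.integrable_of_ae_mem_Icc hμ)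
    (hh.integrable_of_ae_mem_Icc (ae_mem_Icc_betaMeasure α β)) zero_le_one]
  exact ⟨eq_betaMeasure_of_ae_setIntegral_Ici_eq hα hβ hμ, fun hlaw => by simp [hlaw]⟩
end
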